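/- Let k ≥ 0 and a ∈ (0,1). For every n ∈ ℕ, every j ∈ {0,1,…,3ⁿ−1}, and every u ∈ [0, 3^{−n}], writing x_l := j·3^{−n} and x_r := (j+1)·3^{−n}, one has M_{k,a}(x_l + u) − M_{k,a}(x_l) = M_{k,a}(x_r) − M_{k,a}(x_r − u). In particular, for k ≥ 1, M_{k,a}(1−x) = −M_{k,a}(x) for all x ∈ [0,1]. -/

import Mathlib

open Filter Topology MeasureTheory Set
open scoped ENNReal

/-- The `(n+1)`-th ternary digit of `x` (choosing the expansion ending in all `0`s
when two expansions exist, and the all-`2`s expansion for `x = 1`). -/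
noncomputable def tDigit (x : ℝ) (n : ℕ) : ℕ :=
  if x = 1 then 2 else (⌊(3:ℝ) ^ (n + 1) * x⌋ - 3 * ⌊(3:ℝ) ^ n * x⌋).toNat

/-- `l_n(x)`: the number of `1`s among the first `n` ternary digits of `x`. -/
noncomputable def lCount (x : ℝ) (n : ℕ) : ℕ :=
  ((Finset.range n).filter (fun i => tDigit x i = 1)).card

/-- `q_a(d)` with `q_a(0)=0`, `q_a(1)=a`, `q_a(2)=1-a`. -/
noncomputable def qDig (a : ℝ) (d : ℕ) : ℝ :=
  if d = 0 then 0 else if d = 1 then a else 1 - a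

/-- Okamoto's function `F_a`. -/
noncomputable def Okamoto (a x : ℝ) : ℝ :=
  ∑' n : ℕ, a ^ (n - lCount x n) * (1 - 2 * a) ^ lCount x n * qDig a (tDigit x n)

/-- `M_{k,a}(x)`: the `k`-th partial derivative of `F_a(x)` with respect to `a`. -/
noncomputable def Mfun (k : ℕ) (a x : ℝ) : ℝ :=
  iteratedDeriv k (fun b => Okamoto b x) a

/-- `f` has derivative `+∞` at `x` (difference quotients over `y ∈ [0,1] \ {x}`). -/
def derivPInf (f : ℝ → ℝ) (x : ℝ) : Prop :=
  Tendsto (fun y => (f y - f x) / (y - x)) (𝓝[Set.Icc 0 1 \ {x}] x) atTop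

/-- `f` has derivative `-∞` at `x`. -/
def derivMInf (f : ℝ → ℝ) (x : ℝ) : Prop :=
  Tendsto (fun y => (f y - f x) / (y - x)) (𝓝[Set.Icc 0 1 \ {x}] x) atBot

noncomputable def phiOk (a : ℝ) : ℝ :=
  if a = 1/3 then 1/3 else if a = 1/2 then 0
  else Real.log (3 * a) / (Real.log a - Real.log |1 - 2 * a|)

noncomputable def C0 (a : ℝ) : ℝ := 1 / (Real.log a - Real.log |1 - 2 * a|)

noncomputable def hEnt (p : ℝ) : ℝ :=
  (-(p * Real.log p) - (1 - p) * Real.log (1 - p) + (1 - p) * Real.log 2) / Real.log 3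

noncomputable def dOk (a : ℝ) : ℝ := hEnt (phiOk a)

noncomputable def dTilde (a : ℝ) : ℝ := hEnt (1 - 2 * a)

/-!
Write `r(1) = 1 - 2b` and `r(0) = r(2) = b`. The `m`-th term of Okamoto's series is then
`(∏_{i<m} r(x_i)) q_b(x_m)`, a polynomial in `b` of size at most `max(b, |1 - 2b|)^m`.
Peeling off the first digit gives the self-affinity `F_b((d + y)/3) = q_b(d) + r(d) F_b(y)`, so
on each ternary interval of level `n` the function `F_b` is an affine image of `F_b` on `[0, 1]`.
The same step multiplies the defect `F_b(x) + F_b(1 - x) - 1` by `r(d)`, so the defect contracts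
to `0`. Together these give `F_b(x_l + u) + F_b(x_r - u) = F_b(x_l) + F_b(x_r)` for every
`b ∈ (0, 1)`. Differentiating in `b` is legitimate because the series converges uniformly on a
complex neighbourhood of `a`, so `b ↦ F_b(x)` is real-analytic.
-/

section Terms

variable {R : Type*} [CommRing R]

def okamotoSlope (b : R) (e : ℕ) : R := if e = 1 then 1 - 2 * b else b

-- `q_b` over any commutative ring (over `ℝ` it is `qDig`), so that `b` can be made complex.
def okamotoOffset (b : R) (e : ℕ) : R := if e = 0 then 0 else if e = 1 then b else 1 - b

def okamotoTerm (b : R) (d : ℕ → ℕ) (m : ℕ) : R :=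
  (∏ k ∈ Finset.range m, okamotoSlope b (d k)) * okamotoOffset b (d m)

lemma okamotoTerm_zero (b : R) (d : ℕ → ℕ) : okamotoTerm b d 0 = okamotoOffset b (d 0) := by
  simp [okamotoTerm]

lemma okamotoTerm_succ (b : R) (d : ℕ → ℕ) (m : ℕ) :
    okamotoTerm b d (m + 1) = okamotoSlope b (d 0) * okamotoTerm b (fun i => d (i + 1)) m := by
  simp only [okamotoTerm, Finset.prod_range_succ', mul_comm, mul_left_comm]

lemma okamotoSlope_two_sub (b : R) {e : ℕ} (he : e ≤ 2) :
    okamotoSlope b (2 - e) = okamotoSlope b e := by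
  interval_cases e <;> rfl

lemma okamotoOffset_add_okamotoOffset_two_sub (b : R) {e : ℕ} (he : e ≤ 2) :
    okamotoOffset b e + okamotoOffset b (2 - e) = 1 - okamotoSlope b e := by
  interval_cases e <;> simp [okamotoOffset, okamotoSlope]; ring

lemma map_okamotoTerm {S : Type*} [CommRing S] (f : R →+* S) (b : R) (d : ℕ → ℕ) (m : ℕ) :
    f (okamotoTerm b d m) = okamotoTerm (f b) d m := by
  simp [okamotoTerm, okamotoSlope, okamotoOffset, apply_ite f, map_ofNat]

end Terms

lemma norm_okamotoTerm_le {𝕜 : Type*} [RCLike 𝕜] {b : 𝕜} {K : ℝ} (hK : K ≤ 1) (hb : ‖b‖ ≤ K)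
    (hb' : ‖1 - 2 * b‖ ≤ K) (d : ℕ → ℕ) (m : ℕ) : ‖okamotoTerm b d m‖ ≤ K ^ m := by
  have hslope (e : ℕ) : ‖okamotoSlope b e‖ ≤ K := by
    unfold okamotoSlope; split_ifs <;> assumption
  have hoffset (e : ℕ) : ‖okamotoOffset b e‖ ≤ 1 := by
    have h2 : ‖(2 : 𝕜)‖ * ‖1 - b‖ ≤ 2 := by
      rw [← norm_mul, show 2 * (1 - b) = 1 + (1 - 2 * b) by ring]
      linarith [norm_add_le (1 : 𝕜) (1 - 2 * b), norm_one (α := 𝕜)]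
    rw [RCLike.norm_two] at h2
    unfold okamotoOffset; split_ifs <;> simp <;> linarith
  rw [okamotoTerm, norm_mul, norm_prod, ← mul_one (K ^ m)]
  have hK0 : 0 ≤ K := (norm_nonneg b).trans hb
  gcongr
  · calc ∏ k ∈ Finset.range m, ‖okamotoSlope b (d k)‖ ≤ ∏ _k ∈ Finset.range m, K :=
          Finset.prod_le_prod (fun _ _ => norm_nonneg _) (fun k _ => hslope (d k))
      _ = K ^ m := by simp
  · exact hoffset _

lemma differentiable_okamotoTerm {𝕜 : Type*} [NontriviallyNormedField 𝕜] (d : ℕ → ℕ) (m : ℕ) :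
    Differentiable 𝕜 (fun b : 𝕜 => okamotoTerm b d m) := by
  have hslope (e : ℕ) : Differentiable 𝕜 (fun b : 𝕜 => okamotoSlope b e) := by
    unfold okamotoSlope; split_ifs <;> fun_prop
  have hoffset (e : ℕ) : Differentiable 𝕜 (fun b : 𝕜 => okamotoOffset b e) := by
    unfold okamotoOffset; split_ifs <;> fun_prop
  unfold okamotoTerm
  exact (Differentiable.fun_finsetProd fun k _ => hslope (d k)).mul (hoffset (d m))

lemma lCount_succ (x : ℝ) (m : ℕ) :
    lCount x (m + 1) = lCount x m + if tDigit x m = 1 then 1 else 0 := by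
  unfold lCount
  rw [Finset.range_add_one, Finset.filter_insert]
  split_ifs
  · rw [Finset.card_insert_of_notMem (by simp)]
  · simp

lemma pow_mul_pow_lCount_eq_prod (b x : ℝ) (m : ℕ) :
    b ^ (m - lCount x m) * (1 - 2 * b) ^ lCount x m
      = ∏ k ∈ Finset.range m, okamotoSlope b (tDigit x k) := by
  induction m with
  | zero => simp [lCount]
  | succ m ih =>
    have hle : lCount x m ≤ m := (Finset.card_filter_le _ _).trans (Finset.card_range m).le
    rw [Finset.prod_range_succ, ← ih, lCount_succ, okamotoSlope]
    split_ifs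
    · rw [show m + 1 - (lCount x m + 1) = m - lCount x m by omega]; ring
    · rw [add_zero, show m + 1 - lCount x m = m - lCount x m + 1 by omega]; ring

lemma okamoto_eq_tsum (b x : ℝ) : Okamoto b x = ∑' m, okamotoTerm b (tDigit x) m :=
  tsum_congr fun m => by rw [pow_mul_pow_lCount_eq_prod]; rfl

lemma floor_three_pow_succ_mul_add_div_three (d : ℕ) (y : ℝ) (i : ℕ) :
    ⌊(3 : ℝ) ^ (i + 1) * ((d + y) / 3)⌋ = 3 ^ i * d + ⌊(3 : ℝ) ^ i * y⌋ := by
  rw [show (3 : ℝ) ^ (i + 1) * ((d + y) / 3) = (3 : ℝ) ^ i * y + ((3 ^ i * d : ℤ) : ℝ) by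
    push_cast; ring, Int.floor_add_intCast, add_comm]

lemma add_div_three_lt_one {d : ℕ} (hd : d ≤ 2) {y : ℝ} (hy : y < 1) : (d + y) / 3 < 1 := by
  have : (d : ℝ) ≤ 2 := by exact_mod_cast hd
  linarith

lemma tDigit_add_div_three_zero {d : ℕ} (hd : d ≤ 2) {y : ℝ} (hy : y ∈ Ico 0 1) :
    tDigit ((d + y) / 3) 0 = d := by
  have hfloor : ⌊(3 : ℝ) ^ 0 * ((d + y) / 3)⌋ = 0 := by
    rw [pow_zero, one_mul, Int.floor_eq_zero_iff]
    exact ⟨by positivity [hy.1], add_div_three_lt_one hd hy.2⟩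
  rw [tDigit, if_neg (add_div_three_lt_one hd hy.2).ne, floor_three_pow_succ_mul_add_div_three,
    hfloor]
  simp [Int.floor_eq_zero_iff.2 hy]

lemma tDigit_add_div_three_succ {d : ℕ} (hd : d ≤ 2) {y : ℝ} (hy : y ∈ Ico 0 1) (i : ℕ) :
    tDigit ((d + y) / 3) (i + 1) = tDigit y i := by
  rw [tDigit, tDigit, if_neg (add_div_three_lt_one hd hy.2).ne, if_neg hy.2.ne,
    floor_three_pow_succ_mul_add_div_three, floor_three_pow_succ_mul_add_div_three]
  congr 1
  ring

lemma exists_eq_add_div_three {x : ℝ} (hx : x ∈ Icc 0 1) :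
    ∃ d : ℕ, d ≤ 2 ∧ ∃ y ∈ Icc (0 : ℝ) 1, x = (d + y) / 3 := by
  obtain ⟨hx0, hx1⟩ := hx
  by_cases h1 : x ≤ 1 / 3
  · exact ⟨0, by norm_num, 3 * x, ⟨by linarith, by linarith⟩, by ring⟩
  by_cases h2 : x ≤ 2 / 3
  · exact ⟨1, by norm_num, 3 * x - 1, ⟨by linarith, by linarith⟩, by ring⟩
  · exact ⟨2, le_rfl, 3 * x - 2, ⟨by linarith, by linarith⟩, by ring⟩

lemma add_div_three_mem_Icc {d : ℕ} (hd : d ≤ 2) {y : ℝ} (hy : y ∈ Icc 0 1) :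
    (d + y) / 3 ∈ Icc (0 : ℝ) 1 := by
  have : (d : ℝ) ≤ 2 := by exact_mod_cast hd
  constructor <;> linarith [hy.1, hy.2]

lemma one_sub_add_div_three {d : ℕ} (hd : d ≤ 2) (y : ℝ) :
    1 - (d + y) / 3 = ((2 - d : ℕ) + (1 - y)) / 3 := by
  push_cast [Nat.cast_sub hd]
  ring

lemma okamoto_zero (b : ℝ) : Okamoto b 0 = 0 := by
  simp [Okamoto, tDigit, qDig]

def okamotoRate (b : ℝ) : ℝ := max b |1 - 2 * b|

section RealParameter

variable {b : ℝ}

lemma okamotoRate_lt_one (hb : b ∈ Ioo 0 1) : okamotoRate b < 1 :=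
  max_lt hb.2 (abs_lt.2 ⟨by linarith [hb.2], by linarith [hb.1]⟩)

lemma okamotoRate_nonneg (hb : b ∈ Ioo 0 1) : 0 ≤ okamotoRate b :=
  hb.1.le.trans (le_max_left _ _)

lemma abs_okamotoSlope_le (hb : b ∈ Ioo 0 1) (e : ℕ) : |okamotoSlope b e| ≤ okamotoRate b := by
  unfold okamotoSlope okamotoRate
  split_ifs
  · exact le_max_right _ _
  · rw [abs_of_pos hb.1]; exact le_max_left _ _

lemma norm_okamotoTerm_le_okamotoRate (hb : b ∈ Ioo 0 1) (d : ℕ → ℕ) (m : ℕ) :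
    ‖okamotoTerm b d m‖ ≤ okamotoRate b ^ m :=
  norm_okamotoTerm_le (okamotoRate_lt_one hb).le
    (by rw [Real.norm_of_nonneg hb.1.le]; exact le_max_left _ _) (le_max_right _ _) d m

lemma summable_okamotoTerm (hb : b ∈ Ioo 0 1) (d : ℕ → ℕ) : Summable (okamotoTerm b d) :=
  Summable.of_norm_bounded
    (summable_geometric_of_lt_one (okamotoRate_nonneg hb) (okamotoRate_lt_one hb))
    (norm_okamotoTerm_le_okamotoRate hb d)

lemma norm_okamoto_le (hb : b ∈ Ioo 0 1) (x : ℝ) : ‖Okamoto b x‖ ≤ (1 - okamotoRate b)⁻¹ := by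
  rw [okamoto_eq_tsum]
  exact tsum_of_norm_bounded
    (hasSum_geometric_of_lt_one (okamotoRate_nonneg hb) (okamotoRate_lt_one hb))
    (norm_okamotoTerm_le_okamotoRate hb _)

lemma tsum_okamotoTerm_eq (hb : b ∈ Ioo 0 1) (d : ℕ → ℕ) :
    ∑' m, okamotoTerm b d m
      = okamotoOffset b (d 0)
        + okamotoSlope b (d 0) * ∑' m, okamotoTerm b (fun i => d (i + 1)) m := by
  rw [(summable_okamotoTerm hb d).tsum_eq_zero_add, okamotoTerm_zero, ← tsum_mul_left]
  simp only [okamotoTerm_succ]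

lemma okamoto_one (hb : b ∈ Ioo 0 1) : Okamoto b 1 = 1 := by
  have hterm (m : ℕ) : okamotoTerm b (tDigit 1) m = b ^ m * (1 - b) := by
    simp [okamotoTerm, okamotoSlope, okamotoOffset, tDigit]
  rw [okamoto_eq_tsum, tsum_congr hterm, tsum_mul_right,
    tsum_geometric_of_lt_one hb.1.le hb.2, inv_mul_cancel₀ (sub_pos.2 hb.2).ne']

lemma okamoto_add_div_three_of_lt_one (hb : b ∈ Ioo 0 1) {d : ℕ} (hd : d ≤ 2) {y : ℝ}
    (hy : y ∈ Ico 0 1) :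
    Okamoto b ((d + y) / 3) = okamotoOffset b d + okamotoSlope b d * Okamoto b y := by
  rw [okamoto_eq_tsum, tsum_okamotoTerm_eq hb, tDigit_add_div_three_zero hd hy,
    okamoto_eq_tsum]
  simp only [tDigit_add_div_three_succ hd hy]

lemma okamoto_add_div_three (hb : b ∈ Ioo 0 1) {d : ℕ} (hd : d ≤ 2) {y : ℝ}
    (hy : y ∈ Icc 0 1) :
    Okamoto b ((d + y) / 3) = okamotoOffset b d + okamotoSlope b d * Okamoto b y := by
  rcases hy.2.lt_or_eq with hy1 | rfl
  · exact okamoto_add_div_three_of_lt_one hb hd ⟨hy.1, hy1⟩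
  -- `(d + 1) / 3` has digits `d + 1, 0, 0, …`, unless `d = 2`, where it is `1 = 0.222…`
  rw [okamoto_one hb]
  rcases hd.lt_or_eq with hd2 | rfl
  · have h := okamoto_add_div_three_of_lt_one hb (d := d + 1) (by omega) (y := 0) (by simp)
    rw [okamoto_zero, mul_zero, add_zero, Nat.cast_succ, add_zero] at h
    rw [h]
    interval_cases d <;> simp [okamotoOffset, okamotoSlope]; ring
  · norm_num [okamoto_one hb, okamotoOffset, okamotoSlope]

lemma okamoto_symm_defect_add_div_three (hb : b ∈ Ioo 0 1) {d : ℕ} (hd : d ≤ 2) {y : ℝ}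
    (hy : y ∈ Icc 0 1) :
    Okamoto b ((d + y) / 3) + Okamoto b (1 - (d + y) / 3) - 1
      = okamotoSlope b d * (Okamoto b y + Okamoto b (1 - y) - 1) := by
  have hy' : 1 - y ∈ Icc (0 : ℝ) 1 := ⟨by linarith [hy.2], by linarith [hy.1]⟩
  rw [one_sub_add_div_three hd, okamoto_add_div_three hb hd hy,
    okamoto_add_div_three hb (Nat.sub_le 2 d) hy', okamotoSlope_two_sub b hd]
  linear_combination okamotoOffset_add_okamotoOffset_two_sub b hd

theorem okamoto_add_okamoto_one_sub (hb : b ∈ Ioo 0 1) {x : ℝ} (hx : x ∈ Icc 0 1) :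
    Okamoto b x + Okamoto b (1 - x) = 1 := by
  set M := okamotoRate b
  set C := 2 * (1 - M)⁻¹ + 1
  have hbound (n : ℕ) :
      ∀ x ∈ Icc (0 : ℝ) 1, |Okamoto b x + Okamoto b (1 - x) - 1| ≤ C * M ^ n := by
    induction n with
    | zero =>
      intro x _
      have h₁ := norm_okamoto_le hb x
      have h₂ := norm_okamoto_le hb (1 - x)
      rw [Real.norm_eq_abs] at h₁ h₂
      rw [pow_zero, mul_one, abs_le]
      constructor <;> linarith [abs_le.1 h₁, abs_le.1 h₂]
    | succ n ih =>
      intro x hx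
      obtain ⟨d, hd, y, hy, rfl⟩ := exists_eq_add_div_three hx
      rw [okamoto_symm_defect_add_div_three hb hd hy, abs_mul]
      calc _ ≤ M * (C * M ^ n) :=
            mul_le_mul (abs_okamotoSlope_le hb d) (ih y hy) (abs_nonneg _) (okamotoRate_nonneg hb)
        _ = C * M ^ (n + 1) := by ring
  have hlim : Tendsto (fun n => C * M ^ n) atTop (𝓝 0) := by
    simpa using (tendsto_pow_atTop_nhds_zero_of_lt_one (okamotoRate_nonneg hb)
      (okamotoRate_lt_one hb)).const_mul C
  have := ge_of_tendsto' hlim fun n => hbound n x hx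
  linarith [abs_nonpos_iff.1 this]

lemma exists_okamoto_add_div_three_pow (hb : b ∈ Ioo 0 1) (n : ℕ) {j : ℕ} (hj : j < 3 ^ n) :
    ∃ A W : ℝ, ∀ y ∈ Icc (0 : ℝ) 1, Okamoto b ((j + y) / 3 ^ n) = A + W * Okamoto b y := by
  induction n generalizing j with
  | zero => exact ⟨0, 1, fun y _ => by simp [Nat.lt_one_iff.1 hj]⟩
  | succ n ih =>
    have hd : j % 3 ≤ 2 := Nat.le_of_lt_succ (Nat.mod_lt j (by norm_num))
    obtain ⟨A, W, hAW⟩ := ih (j := j / 3) (by rw [pow_succ] at hj; omega)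
    refine ⟨A + W * okamotoOffset b (j % 3), W * okamotoSlope b (j % 3), fun y hy => ?_⟩
    have hj3 : (j : ℝ) = 3 * (j / 3 : ℕ) + (j % 3 : ℕ) := by
      exact_mod_cast (Nat.div_add_mod j 3).symm
    have hsplit :
        ((j : ℝ) + y) / 3 ^ (n + 1) = ((j / 3 : ℕ) + ((j % 3 : ℕ) + y) / 3) / 3 ^ n := by
      rw [hj3]; field_simp; ring
    rw [hsplit, hAW _ (add_div_three_mem_Icc hd hy), okamoto_add_div_three hb hd hy]
    ring

lemma okamoto_add_okamoto_sub_eq (hb : b ∈ Ioo 0 1) {n j : ℕ} (hj : j < 3 ^ n) {u : ℝ}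
    (hu : u ∈ Icc 0 ((3 : ℝ) ^ n)⁻¹) :
    Okamoto b ((j : ℝ) / 3 ^ n + u) + Okamoto b (((j : ℝ) + 1) / 3 ^ n - u)
      = Okamoto b ((j : ℝ) / 3 ^ n) + Okamoto b (((j : ℝ) + 1) / 3 ^ n) := by
  obtain ⟨A, W, hAW⟩ := exists_okamoto_add_div_three_pow hb n hj
  have h3 : (0 : ℝ) < 3 ^ n := by positivity
  set y := (3 : ℝ) ^ n * u with hy_def
  have hy : y ∈ Icc (0 : ℝ) 1 := ⟨by positivity [hu.1], by
    simpa [h3.ne'] using mul_le_mul_of_nonneg_left hu.2 h3.le⟩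
  have hy' : 1 - y ∈ Icc (0 : ℝ) 1 := ⟨by linarith [hy.2], by linarith [hy.1]⟩
  have e₁ : (j : ℝ) / 3 ^ n + u = (j + y) / 3 ^ n := by rw [hy_def]; field_simp
  have e₂ : ((j : ℝ) + 1) / 3 ^ n - u = (j + (1 - y)) / 3 ^ n := by rw [hy_def]; field_simp; ring
  have e₃ : (j : ℝ) / 3 ^ n = (j + 0) / 3 ^ n := by rw [add_zero]
  rw [e₁, e₂, e₃, hAW y hy, hAW _ hy', hAW 0 ⟨le_rfl, zero_le_one⟩, hAW 1 ⟨zero_le_one, le_rfl⟩,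
    okamoto_zero, okamoto_one hb]
  linear_combination W * okamoto_add_okamoto_one_sub hb hy

end RealParameter

theorem contDiffAt_okamoto {a : ℝ} (ha : a ∈ Ioo 0 1) (x : ℝ) (n : WithTop ℕ∞) :
    ContDiffAt ℝ n (fun b => Okamoto b x) a := by
  obtain ⟨K, hK, hK1⟩ := exists_between (okamotoRate_lt_one ha)
  set U : Set ℂ := {z | ‖z‖ < K ∧ ‖1 - 2 * z‖ < K}
  have hU : IsOpen U :=
    (isOpen_lt continuous_norm continuous_const).inter
      (isOpen_lt (continuous_const.sub (continuous_const.mul continuous_id)).norm continuous_const)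
  have haU : (a : ℂ) ∈ U := by
    refine ⟨?_, ?_⟩
    · rw [Complex.norm_real, Real.norm_of_nonneg ha.1.le]
      exact (le_max_left _ _).trans_lt hK
    · rw [show 1 - 2 * (a : ℂ) = ((1 - 2 * a : ℝ) : ℂ) by push_cast; ring, Complex.norm_real]
      exact (le_max_right _ _).trans_lt hK
  have hdiff : DifferentiableOn ℂ (fun z => ∑' m, okamotoTerm z (tDigit x) m) U :=
    Complex.differentiableOn_tsum_of_summable_norm
      (summable_geometric_of_lt_one ((okamotoRate_nonneg ha).trans hK.le) hK1)
      (fun m => (differentiable_okamotoTerm _ m).differentiableOn) hU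
      (fun m _ hz => norm_okamotoTerm_le hK1.le hz.1.le hz.2.le _ m)
  have hre :
      (fun b => Okamoto b x) = fun b : ℝ => (∑' m, okamotoTerm (b : ℂ) (tDigit x) m).re := by
    funext b
    rw [okamoto_eq_tsum, ← Complex.ofReal_re (∑' m, _), Complex.ofReal_tsum]
    simp only [← Complex.ofRealHom_eq_coe, map_okamotoTerm]
  rw [hre]
  exact ((hdiff.analyticAt (hU.mem_nhds haU)).contDiffAt).real_of_complex

lemma iteratedDeriv_add_eq_of_eventuallyEq {𝕜 F : Type*} [NontriviallyNormedField 𝕜]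
    [NormedAddCommGroup F] [NormedSpace 𝕜 F] {n : ℕ} {f₁ f₂ g₁ g₂ : 𝕜 → F} {x : 𝕜}
    (h : f₁ + f₂ =ᶠ[𝓝 x] g₁ + g₂) (hf₁ : ContDiffAt 𝕜 n f₁ x) (hf₂ : ContDiffAt 𝕜 n f₂ x)
    (hg₁ : ContDiffAt 𝕜 n g₁ x) (hg₂ : ContDiffAt 𝕜 n g₂ x) :
    iteratedDeriv n f₁ x + iteratedDeriv n f₂ x = iteratedDeriv n g₁ x + iteratedDeriv n g₂ x := by
  rw [← iteratedDeriv_add hf₁ hf₂, ← iteratedDeriv_add hg₁ hg₂, h.iteratedDeriv_eq]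

/-- the symmetry property of `M_{k,a}` on ternary intervals, and the point
symmetry `M_{k,a}(1-x) = -M_{k,a}(x)` for `k ≥ 1`. -/
theorem stmt18 (k : ℕ) (a : ℝ) (ha : a ∈ Set.Ioo (0:ℝ) 1) :
    (∀ n : ℕ, ∀ j : ℕ, j < 3 ^ n → ∀ u ∈ Set.Icc (0:ℝ) (((3:ℝ) ^ n)⁻¹),
      Mfun k a ((j : ℝ) / 3 ^ n + u) - Mfun k a ((j : ℝ) / 3 ^ n) =
        Mfun k a (((j : ℝ) + 1) / 3 ^ n) - Mfun k a (((j : ℝ) + 1) / 3 ^ n - u)) ∧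
    (1 ≤ k → ∀ x ∈ Set.Icc (0:ℝ) 1, Mfun k a (1 - x) = -Mfun k a x) := by
  have hnhds : ∀ᶠ b in 𝓝 a, b ∈ Ioo (0 : ℝ) 1 := isOpen_Ioo.mem_nhds ha
  refine ⟨fun n j hj u hu => ?_, fun hk x hx => ?_⟩
  · have h := iteratedDeriv_add_eq_of_eventuallyEq (n := k)
      (hnhds.mono fun b hb => okamoto_add_okamoto_sub_eq hb hj hu)
      (contDiffAt_okamoto ha _ _) (contDiffAt_okamoto ha _ _)
      (contDiffAt_okamoto ha _ _) (contDiffAt_okamoto ha _ _)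
    simp only [Mfun]
    linarith
  · have h : (fun b => Okamoto b (1 - x)) =ᶠ[𝓝 a] fun b => 1 - Okamoto b x :=
      hnhds.mono fun b hb => by linarith [okamoto_add_okamoto_one_sub hb hx]
    rw [Mfun, h.iteratedDeriv_eq, iteratedDeriv_const_sub hk, iteratedDeriv_neg]
    rfl
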